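/- Let G be the complement of a finite bipartite graph and let H be a finite nonempty bipartite graph. Then the lexicographic product G[H] is k-indicated colorable for every integer k ≥ χ(G[H]). -/

import Mathlib

open SimpleGraph
open scoped Classical

/-- The lexicographic product `G[H]`. -/
def lexProd {α β : Type*} (G : SimpleGraph α) (H : SimpleGraph β) :
    SimpleGraph (α × β) where
  Adj x y := G.Adj x.1 y.1 ∨ (x.1 = y.1 ∧ H.Adj x.2 y.2)
  symm := ⟨by
    rintro x y (h | ⟨h1, h2⟩)
    · exact Or.inl h.symm
    · exact Or.inr ⟨h1.symm, h2.symm⟩⟩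
  loopless := ⟨by
    rintro x (h | ⟨-, h2⟩)
    · exact G.loopless.irrefl _ h
    · exact H.loopless.irrefl _ h2⟩

/-- `AnnWins G k c`: starting from the partial proper coloring `c`, Ann (who presents
uncolored vertices one at a time) has a strategy so that Ben (who properly colors each
presented vertex with one of `k` colors) can always move, and the whole graph gets colored. -/
inductive AnnWins {V : Type*} (G : SimpleGraph V) (k : ℕ) :
    (V → Option (Fin k)) → Prop
  | done (c : V → Option (Fin k)) (h : ∀ v, (c v).isSome) : AnnWins G k c
  | step (c : V → Option (Fin k)) (v : V) (hv : c v = none)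
      (hex : ∃ col : Fin k, ∀ u, G.Adj u v → c u ≠ some col)
      (h : ∀ col : Fin k, (∀ u, G.Adj u v → c u ≠ some col) →
        AnnWins G k (Function.update c v (some col))) : AnnWins G k c

/-- A graph is `k`-indicated colorable if Ann wins the indicated coloring game
with `k` colors starting from the empty coloring. -/
def IndicatedColorable {V : Type*} (G : SimpleGraph V) (k : ℕ) : Prop :=
  AnnWins G k (fun _ => none)

/-- The indicated chromatic number `χᵢ(G)`. -/
noncomputable def indicatedChromaticNumber {V : Type*} (G : SimpleGraph V) : ℕ :=
  sInf {k | IndicatedColorable G k}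

/-- The coloring number `col(G)`: the least `d` such that every nonempty set `S` of
vertices contains a vertex with fewer than `d` neighbours in `S`. -/
noncomputable def coloringNumber {V : Type*} (G : SimpleGraph V) : ℕ :=
  sInf {d : ℕ | ∀ S : Set V, S.Nonempty → ∃ v ∈ S, {u ∈ S | G.Adj v u}.ncard < d}

/-- `F`-freeness: no induced subgraph of `G` is isomorphic to `F`. -/
def IsFreeOf {α β : Type*} (F : SimpleGraph α) (G : SimpleGraph β) : Prop :=
  IsEmpty (F ↪g G)

/-- The complete expansion of `G`, replacing each vertex `v` by a clique on `m v` vertices. -/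
def completeExpansion {V : Type*} (G : SimpleGraph V) (m : V → ℕ) :
    SimpleGraph (Σ v, Fin (m v)) where
  Adj x y := G.Adj x.1 y.1 ∨ (x.1 = y.1 ∧ x ≠ y)
  symm := ⟨by
    rintro x y (h | ⟨h1, h2⟩)
    · exact Or.inl h.symm
    · exact Or.inr ⟨h1.symm, h2.symm⟩⟩
  loopless := ⟨by
    rintro x (h | ⟨-, h2⟩)
    · exact G.loopless.irrefl _ h
    · exact h2 rfl⟩

/-- The independent expansion of `G`, replacing each vertex `v` by an independent
set of `m v` vertices. -/
def independentExpansion {V : Type*} (G : SimpleGraph V) (m : V → ℕ) :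
    SimpleGraph (Σ v, Fin (m v)) where
  Adj x y := G.Adj x.1 y.1
  symm := ⟨fun _ _ h => h.symm⟩
  loopless := ⟨fun _ h => G.loopless.irrefl _ h⟩

/-!
Split the vertices of `G` into two cliques `A` and `Aᶜ`, and let `S` be an edge of `H` (a single
vertex if `H` has no edges); the vertices `{f} × S` are the seeds of fibre `f`. Ann first
presents the seeds of the fibres in `A`. They form a clique, so they take `|A| |S| ≤ k` distinct
colours. Then she presents the seeds of the fibres in `Aᶜ` while keeping a Hall-type inequality
between the seeds still uncoloured in a set `T ⊆ Aᶜ` of fibres and the colours that are unused or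
used only at one non-neighbour of `T` in `A`. A colour Ben gives to such a seed is of one of
these two kinds. By submodularity, serving a fibre from a smallest tight set never breaks the
inequality. The inequality holds at the start because the fibres of `(A \ N(T)) ∪ T` form a
clique. At the end, the seed colours of each fibre give one colour for each side of `H` that the
whole fibre can still use. Ann completes the fibre by first presenting vertices whose colour
cannot spoil this; when no such vertex is left, she swaps the two colours if needed after Ben's
move.
-/

open Finset

section Game

variable {V : Type*} {G : SimpleGraph V} {k : ℕ}

def IsAvailable (G : SimpleGraph V) (c : V → Option (Fin k)) (v : V) (col : Fin k) : Prop :=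
  ∀ u, G.Adj u v → c u ≠ some col

def IsProperPartial (G : SimpleGraph V) (c : V → Option (Fin k)) : Prop :=
  ∀ v col, c v = some col → IsAvailable G c v col

theorem IsProperPartial.update [DecidableEq V] {c : V → Option (Fin k)} {v : V} {col : Fin k}
    (hc : IsProperPartial G c) (hcol : IsAvailable G c v col) :
    IsProperPartial G (Function.update c v (some col)) := by
  intro w col' hw u huw
  rcases eq_or_ne w v with rfl | hwv
  · obtain rfl : col = col' := by simpa using hw
    rw [Function.update_of_ne huw.ne]
    exact hcol u huw
  · rw [Function.update_of_ne hwv] at hw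
    rcases eq_or_ne u v with rfl | huv
    · rw [Function.update_self]
      exact fun h => hcol w huw.symm (by rwa [Option.some_injective _ h])
    · rw [Function.update_of_ne huv]
      exact hc w col' hw u huw

theorem IsProperPartial.ne_of_adj {c : V → Option (Fin k)} (hc : IsProperPartial G c) {u v : V}
    {col col' : Fin k} (huv : G.Adj u v) (hu : c u = some col) (hv : c v = some col') :
    col ≠ col' := by
  rintro rfl
  exact hc v col hv u huv hu

theorem AnnWins.of_invariant [Fintype V] [DecidableEq V] (P : (V → Option (Fin k)) → Prop)
    (hP : ∀ c, IsProperPartial G c → P c → AnnWins G k c ∨ ∃ v, c v = none ∧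
      (∃ col, IsAvailable G c v col) ∧
      ∀ col, IsAvailable G c v col → P (Function.update c v (some col)))
    (c : V → Option (Fin k)) (hc : IsProperPartial G c) (hPc : P c) : AnnWins G k c := by
  induction hn : #{v | c v = none} using Nat.strong_induction_on generalizing c with
  | _ n ih =>
  obtain hwin | ⟨v, hv, hex, hnext⟩ := hP c hc hPc
  · exact hwin
  refine AnnWins.step c v hv hex fun col hcol => ?_
  have hlt : #{w | Function.update c v (some col) w = none} < n := by
    refine hn ▸ card_lt_card ⟨fun w => ?_, fun hsub => ?_⟩
    · simp only [mem_filter, mem_univ, true_and]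
      rcases eq_or_ne w v with rfl | hwv <;> simp_all
    · simpa using hsub (by simpa using hv : v ∈ ({w | c w = none} : Finset V))
  convert ih _ hlt _ (hc.update hcol) (hnext col hcol) rfl

theorem AnnWins.of_forall_isSome {c : V → Option (Fin k)} (h : ∀ v, c v ≠ none) : AnnWins G k c :=
  AnnWins.done c fun v => Option.isSome_iff_ne_none.2 (h v)

end Game

section UsedColors

variable {V : Type*} [Fintype V] {G : SimpleGraph V} {k : ℕ} {c : V → Option (Fin k)}

def usedColors (c : V → Option (Fin k)) : Finset (Fin k) :=
  univ.biUnion fun v => (c v).toFinset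

theorem mem_usedColors {col : Fin k} : col ∈ usedColors c ↔ ∃ v, c v = some col := by
  simp [usedColors]

theorem isAvailable_of_notMem_usedColors {col : Fin k} (h : col ∉ usedColors c) (v : V) :
    IsAvailable G c v col :=
  fun u _ hu => h (mem_usedColors.2 ⟨u, hu⟩)

theorem card_usedColors_le {P : Finset V} (hP : ∀ v, c v ≠ none → v ∈ P) :
    #(usedColors c) ≤ #P := by
  calc #(usedColors c) ≤ #(P.biUnion fun v => (c v).toFinset) := by
        refine card_le_card fun col hcol => ?_
        obtain ⟨v, hv⟩ := mem_usedColors.1 hcol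
        exact mem_biUnion.2 ⟨v, hP v (by simp [hv]), by simp [hv]⟩
    _ ≤ ∑ v ∈ P, #(c v).toFinset := card_biUnion_le
    _ ≤ ∑ _v ∈ P, 1 := sum_le_sum fun v _ => by cases c v <;> simp
    _ = #P := by simp

theorem exists_notMem_usedColors (h : #(usedColors c) < k) : ∃ col, col ∉ usedColors c := by
  by_contra! hall
  exact h.not_ge (by simpa using card_le_card fun col (_ : col ∈ univ) => hall col)

theorem usedColors_update [DecidableEq V] {v : V} (hv : c v = none) (col : Fin k) :
    usedColors (Function.update c v (some col)) = insert col (usedColors c) := by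
  ext col'
  simp only [mem_insert, mem_usedColors]
  constructor
  · rintro ⟨w, hw⟩
    rcases eq_or_ne w v with rfl | hwv
    · simp_all
    · rw [Function.update_of_ne hwv] at hw
      exact Or.inr ⟨w, hw⟩
  · rintro (rfl | ⟨w, hw⟩)
    · exact ⟨v, Function.update_self ..⟩
    · exact ⟨w, by rwa [Function.update_of_ne (by rintro rfl; simp_all)]⟩

end UsedColors

theorem Finset.sum_update_sub_one_add_one {ι : Type*} [DecidableEq ι] {T : Finset ι} {f : ι → ℕ}
    {i : ι} (hi : i ∈ T) (hf : f i ≠ 0) :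
    ∑ x ∈ T, Function.update f i (f i - 1) x + 1 = ∑ x ∈ T, f x := by
  rw [sum_update_of_mem hi, sum_eq_add_sum_sdiff_singleton_of_mem hi f]
  omega

section Hall

variable {ι : Type*} [DecidableEq ι]

def HallCondition (B : Finset ι) (N : ι → Finset ι) (d s : ι → ℕ) (U k : ℕ) : Prop :=
  ∀ T ⊆ B, ∑ b ∈ T, d b + U ≤ k + ∑ a ∈ T.biUnion N, s a

def IsTight (N : ι → Finset ι) (d s : ι → ℕ) (U k : ℕ) (T : Finset ι) : Prop :=
  ∑ b ∈ T, d b + U = k + ∑ a ∈ T.biUnion N, s a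

/-- Serving `b₀` next preserves the Hall condition: a tight set avoiding `b₀` has no spare colour
and no supply shared with `b₀`. -/
def IsHallPivot (B : Finset ι) (N : ι → Finset ι) (d s : ι → ℕ) (U k : ℕ) (b₀ : ι) : Prop :=
  b₀ ∈ B ∧ d b₀ ≠ 0 ∧ ∀ T ⊆ B, IsTight N d s U k T → b₀ ∉ T →
    U = k ∧ ∀ a ∈ T.biUnion N ∩ N b₀, s a = 0

variable {B : Finset ι} {N : ι → Finset ι} {d s : ι → ℕ} {U k : ℕ}

/-- The supply `T ↦ ∑ a ∈ T.biUnion N, s a` is submodular and the demand is modular. -/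
theorem HallCondition.isTight_inter (h : HallCondition B N d s U k) {T T' : Finset ι}
    (hT : T ⊆ B) (hT' : T' ⊆ B) (ht : IsTight N d s U k T) (ht' : IsTight N d s U k T') :
    IsTight N d s U k (T ∩ T') ∧
      ∑ a ∈ T.biUnion N ∩ T'.biUnion N, s a = ∑ a ∈ (T ∩ T').biUnion N, s a := by
  have hunion := h _ (union_subset hT hT')
  have hinter := h (T ∩ T') (inter_subset_left.trans hT)
  rw [union_biUnion] at hunion
  have hd : ∑ b ∈ T ∪ T', d b + ∑ b ∈ T ∩ T', d b = ∑ b ∈ T, d b + ∑ b ∈ T', d b :=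
    sum_union_inter
  have hs : ∑ a ∈ T.biUnion N ∪ T'.biUnion N, s a + ∑ a ∈ T.biUnion N ∩ T'.biUnion N, s a =
      ∑ a ∈ T.biUnion N, s a + ∑ a ∈ T'.biUnion N, s a := sum_union_inter
  have hmono : ∑ a ∈ (T ∩ T').biUnion N, s a ≤ ∑ a ∈ T.biUnion N ∩ T'.biUnion N, s a :=
    sum_le_sum_of_subset <| subset_inter (biUnion_subset_biUnion_of_subset_left _ inter_subset_left)
      (biUnion_subset_biUnion_of_subset_left _ inter_subset_right)
  unfold IsTight at ht ht' ⊢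
  omega

theorem HallCondition.exists_isHallPivot (h : HallCondition B N d s U k) (hU : U ≤ k)
    (hd : ∃ b ∈ B, d b ≠ 0) : ∃ b₀, IsHallPivot B N d s U k b₀ := by
  set D := B.powerset.filter fun T => IsTight N d s U k T ∧ ∑ b ∈ T, d b ≠ 0
  by_cases hD : D.Nonempty
  · -- every demanding member of a smallest tight set of positive demand is a pivot
    obtain ⟨T₁, hT₁D, hmin⟩ := exists_min_image D card hD
    simp only [D, mem_filter, mem_powerset] at hT₁D hmin
    obtain ⟨hT₁, ht₁, hd₁⟩ := hT₁D
    obtain ⟨b₀, hb₀, hdb₀⟩ := exists_ne_zero_of_sum_ne_zero hd₁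
    refine ⟨b₀, hT₁ hb₀, hdb₀, fun T hT ht hb₀T => ?_⟩
    obtain ⟨htI, hsI⟩ := h.isTight_inter hT hT₁ ht ht₁
    have hdI : ∑ b ∈ T ∩ T₁, d b = 0 := by
      by_contra hne
      have := hmin (T ∩ T₁) ⟨inter_subset_left.trans hT, htI, hne⟩
      have := card_lt_card <| (ssubset_iff_of_subset inter_subset_right).2
        ⟨b₀, hb₀, fun hm => hb₀T (mem_inter.1 hm).1⟩
      omega
    have hsum : ∑ a ∈ T.biUnion N ∩ T₁.biUnion N, s a = 0 := by
      unfold IsTight at htI; omega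
    refine ⟨by unfold IsTight at htI; omega, fun a ha => ?_⟩
    refine (sum_eq_zero_iff.1 hsum) a (mem_inter.2 ⟨(mem_inter.1 ha).1, ?_⟩)
    exact mem_biUnion.2 ⟨b₀, hb₀, (mem_inter.1 ha).2⟩
  · obtain ⟨b₀, hb₀, hdb₀⟩ := hd
    refine ⟨b₀, hb₀, hdb₀, fun T hT ht _ => ?_⟩
    have hdT : ∑ b ∈ T, d b = 0 := by
      by_contra hne
      exact hD ⟨T, by simp only [D, mem_filter, mem_powerset]; exact ⟨hT, ht, hne⟩⟩
    have hsum : ∑ a ∈ T.biUnion N, s a = 0 := by unfold IsTight at ht; omega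
    refine ⟨by unfold IsTight at ht; omega, fun a ha => ?_⟩
    exact (sum_eq_zero_iff.1 hsum) a (mem_inter.1 ha).1

theorem HallCondition.update_of_fresh (h : HallCondition B N d s U k) {b₀ : ι}
    (hb₀ : IsHallPivot B N d s U k b₀) (hU : U < k) {s' : ι → ℕ}
    (hs' : ∀ b ∈ B, ∀ a ∈ N b, s' a = s a) :
    HallCondition B N (Function.update d b₀ (d b₀ - 1)) s' (U + 1) k := by
  intro T hT
  have hsT : ∑ a ∈ T.biUnion N, s' a = ∑ a ∈ T.biUnion N, s a := by
    refine sum_congr rfl fun a ha => ?_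
    obtain ⟨b, hb, hab⟩ := mem_biUnion.1 ha
    exact hs' b (hT hb) a hab
  have hold := h T hT
  rw [hsT]
  by_cases hbT : b₀ ∈ T
  · have := sum_update_sub_one_add_one hbT hb₀.2.1
    omega
  · rw [sum_update_of_notMem hbT]
    have : ¬ IsTight N d s U k T := fun ht => hU.ne (hb₀.2.2 T hT ht hbT).1
    unfold IsTight at this
    omega

theorem HallCondition.update_of_reuse (h : HallCondition B N d s U k) {b₀ a₀ : ι}
    (hb₀ : IsHallPivot B N d s U k b₀) (ha₀ : a₀ ∈ N b₀) (hs₀ : s a₀ ≠ 0) {s' : ι → ℕ}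
    (hs' : ∀ b ∈ B, ∀ a ∈ N b, s' a = Function.update s a₀ (s a₀ - 1) a) :
    HallCondition B N (Function.update d b₀ (d b₀ - 1)) s' U k := by
  intro T hT
  have hsT : ∑ a ∈ T.biUnion N, s' a = ∑ a ∈ T.biUnion N, Function.update s a₀ (s a₀ - 1) a := by
    refine sum_congr rfl fun a ha => ?_
    obtain ⟨b, hb, hab⟩ := mem_biUnion.1 ha
    exact hs' b (hT hb) a hab
  have hold := h T hT
  rw [hsT]
  by_cases hbT : b₀ ∈ T
  · have hd := sum_update_sub_one_add_one hbT hb₀.2.1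
    have hs := sum_update_sub_one_add_one (mem_biUnion.2 ⟨b₀, hbT, ha₀⟩) hs₀
    omega
  · rw [sum_update_of_notMem hbT]
    by_cases haT : a₀ ∈ T.biUnion N
    · have hs := sum_update_sub_one_add_one haT hs₀
      have : ¬ IsTight N d s U k T := fun ht =>
        hs₀ ((hb₀.2.2 T hT ht hbT).2 a₀ (mem_inter.2 ⟨haT, ha₀⟩))
      unfold IsTight at this
      omega
    · rw [sum_update_of_notMem haT]
      exact hold

end Hall

section LexProd

variable {α β : Type*} {G : SimpleGraph α} {H : SimpleGraph β} {k : ℕ}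

theorem isClique_lexProd_product {F : Set α} {S : Set β} (hF : G.IsClique F)
    (hS : H.IsClique S) : (lexProd G H).IsClique (F ×ˢ S) := by
  rintro ⟨f, x⟩ ⟨hf, hx⟩ ⟨g, y⟩ ⟨hg, hy⟩ hne
  by_cases hfg : f = g
  · subst hfg
    exact Or.inr ⟨rfl, hS hx hy fun h => hne (congrArg _ h)⟩
  · exact Or.inl (hF hf hg hfg)

/-- `τ` gives each side of the bipartition `fB` of `H` a colour that already occurs in fibre `f`
and that every uncoloured vertex of the fibre on that side can still take. -/
def IsTemplate (G : SimpleGraph α) (H : SimpleGraph β) (fB : β → Bool)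
    (c : α × β → Option (Fin k)) (f : α) (τ : Bool → Fin k) : Prop :=
  ∀ x, c (f, x) = none →
    (∃ y, c (f, y) = some (τ (fB x))) ∧ IsAvailable (lexProd G H) c (f, x) (τ (fB x)) ∧
      ∀ y, H.Adj x y → c (f, y) = none → τ (fB x) ≠ τ (fB y)

variable {fB : β → Bool} {c : α × β → Option (Fin k)} {τ : Bool → Fin k}

theorem IsTemplate.update_of_ne {f g : α} (hτ : IsTemplate G H fB c g τ) (hfg : f ≠ g) {z : β}
    {col : Fin k} (hcol : IsAvailable (lexProd G H) c (f, z) col) :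
    IsTemplate G H fB (Function.update c (f, z) (some col)) g τ := by
  have hne : ∀ y, ((g, y) : α × β) ≠ (f, z) := fun y h => hfg (congrArg Prod.fst h).symm
  intro x hx
  rw [Function.update_of_ne (hne x)] at hx
  obtain ⟨⟨y, hy⟩, havail, hsep⟩ := hτ x hx
  refine ⟨⟨y, by rwa [Function.update_of_ne (hne y)]⟩, fun u hu => ?_, fun y hxy hy => ?_⟩
  · rcases eq_or_ne u (f, z) with rfl | hu'
    · rw [Function.update_self]
      have hGfg : G.Adj f g := hu.resolve_right fun h => hfg h.1
      exact fun h => hcol (g, y) (Or.inl hGfg.symm) (by rw [hy, h])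
    · rw [Function.update_of_ne hu']
      exact havail u hu
  · rw [Function.update_of_ne (hne y)] at hy
    exact hsep y hxy hy

theorem IsTemplate.update_self {f : α} (hτ : IsTemplate G H fB c f τ) {z : β}
    (hz : c (f, z) = none) {col : Fin k}
    (hcol : ∀ y, H.Adj z y → c (f, y) = none → col ≠ τ (fB y)) :
    IsTemplate G H fB (Function.update c (f, z) (some col)) f τ := by
  intro x hx
  have hxz : ((f, x) : α × β) ≠ (f, z) := fun h => by simp_all
  rw [Function.update_of_ne hxz] at hx
  obtain ⟨⟨y, hy⟩, havail, hsep⟩ := hτ x hx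
  have hyz : ((f, y) : α × β) ≠ (f, z) := fun h => by simp_all
  refine ⟨⟨y, by rwa [Function.update_of_ne hyz]⟩, fun u hu => ?_, fun y hxy hy => ?_⟩
  · rcases eq_or_ne u (f, z) with rfl | hu'
    · rw [Function.update_self]
      have hzx : H.Adj z x := hu.resolve_left (G.loopless.irrefl f) |>.2
      exact fun h => hcol x hzx hx (Option.some_injective _ h)
    · rw [Function.update_of_ne hu']
      exact havail u hu
  · have hyz' : ((f, y) : α × β) ≠ (f, z) := fun h => by simp_all
    rw [Function.update_of_ne hyz'] at hy
    exact hsep y hxy hy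

theorem eq_not_of_adj (hfB : ∀ x y, H.Adj x y → fB x ≠ fB y) {x y : β} (h : H.Adj x y) :
    fB y = !fB x :=
  Bool.eq_not_of_ne (hfB x y h).symm

theorem IsTemplate.swap {f : α} (hτ : IsTemplate G H fB c f τ)
    (hfB : ∀ x y, H.Adj x y → fB x ≠ fB y)
    (hunsafe : ∀ x, c (f, x) = none →
      ∃ y, H.Adj x y ∧ c (f, y) = none ∧ IsAvailable (lexProd G H) c (f, x) (τ (fB y))) :
    IsTemplate G H fB c f (fun i => τ !i) := by
  intro x hx
  obtain ⟨y, hxy, hy, havail⟩ := hunsafe x hx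
  rw [eq_not_of_adj hfB hxy] at havail
  refine ⟨?_, havail, fun y' hxy' hy' => ?_⟩
  · obtain ⟨⟨w, hw⟩, -, -⟩ := hτ y hy
    exact ⟨w, by simpa only [← eq_not_of_adj hfB hxy]⟩
  · have hsep := (hτ x hx).2.2 y' hxy' hy'
    rw [eq_not_of_adj hfB hxy'] at hsep ⊢
    simpa only [Bool.not_not] using hsep.symm

/-- A safe vertex is one whose colouring cannot spoil the template, whatever Ben does. Without
one, every uncoloured vertex accepts both template colours, and after Ben's move one of the two
orientations of the template still works. -/
theorem IsTemplate.exists_move {f : α} (hτ : IsTemplate G H fB c f τ)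
    (hfB : ∀ x y, H.Adj x y → fB x ≠ fB y) {z : β} (hz : c (f, z) = none) :
    ∃ x, c (f, x) = none ∧ (∃ col, IsAvailable (lexProd G H) c (f, x) col) ∧
      ∀ col, IsAvailable (lexProd G H) c (f, x) col →
        ∃ σ, IsTemplate G H fB (Function.update c (f, x) (some col)) f σ := by
  by_cases hsafe : ∃ x, c (f, x) = none ∧
      ∀ y, H.Adj x y → c (f, y) = none → ¬ IsAvailable (lexProd G H) c (f, x) (τ (fB y))
  · obtain ⟨x, hx, hsafe⟩ := hsafe
    refine ⟨x, hx, ⟨_, (hτ x hx).2.1⟩, fun col hcol => ⟨τ, hτ.update_self hx ?_⟩⟩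
    rintro y hxy hy rfl
    exact hsafe y hxy hy hcol
  · push Not at hsafe
    refine ⟨z, hz, ⟨_, (hτ z hz).2.1⟩, fun col hcol => ?_⟩
    by_cases hswap : col = τ !fB z
    · refine ⟨fun i => τ !i, (hτ.swap hfB hsafe).update_self hz ?_⟩
      intro y hzy hy
      rw [hswap, eq_not_of_adj hfB hzy, Bool.not_not]
      simpa only [eq_not_of_adj hfB hzy] using ((hτ z hz).2.2 y hzy hy).symm
    · refine ⟨τ, hτ.update_self hz fun y hzy _ => ?_⟩
      rwa [eq_not_of_adj hfB hzy]

theorem annWins_of_forall_isTemplate [Fintype α] [Fintype β]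
    (hfB : ∀ x y, H.Adj x y → fB x ≠ fB y) (hc : IsProperPartial (lexProd G H) c)
    (hτ : ∀ f, (∃ x, c (f, x) = none) → ∃ τ, IsTemplate G H fB c f τ) :
    AnnWins (lexProd G H) k c := by
  refine AnnWins.of_invariant
    (fun c => ∀ f, (∃ x, c (f, x) = none) → ∃ τ, IsTemplate G H fB c f τ)
    (fun c _ hτ => ?_) c hc hτ
  by_cases hfull : ∀ v, c v ≠ none
  · exact Or.inl (AnnWins.of_forall_isSome hfull)
  push Not at hfull
  obtain ⟨⟨f, z⟩, hz⟩ := hfull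
  obtain ⟨τ, hτf⟩ := hτ f ⟨z, hz⟩
  obtain ⟨x, hx, hex, hmove⟩ := hτf.exists_move hfB hz
  refine Or.inr ⟨(f, x), hx, hex, fun col hcol g hg => ?_⟩
  rcases eq_or_ne f g with rfl | hfg
  · exact hmove col hcol
  · obtain ⟨y, hy⟩ := hg
    rw [Function.update_of_ne fun h => hfg (congrArg Prod.fst h).symm] at hy
    obtain ⟨σ, hσ⟩ := hτ g ⟨y, hy⟩
    exact ⟨σ, hσ.update_of_ne hfg hcol⟩

theorem exists_isTemplate_of_seeded {S : Finset β} (hfB : ∀ x y, H.Adj x y → fB x ≠ fB y)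
    (hS : H.IsClique (S : Set β)) (hSfB : ∀ x, ∃ s ∈ S, fB s = fB x)
    (hc : IsProperPartial (lexProd G H) c) {f : α} (hseed : ∀ x, c (f, x) ≠ none ↔ x ∈ S)
    {x₀ : β} (hx₀ : c (f, x₀) = none) : ∃ τ, IsTemplate G H fB c f τ := by
  have hseedAdj : ∀ s ∈ S, ∀ s' ∈ S, fB s ≠ fB s' → (lexProd G H).Adj (f, s) (f, s') :=
    fun s hs s' hs' hne => Or.inr ⟨rfl, hS hs hs' fun h => hne (h ▸ rfl)⟩
  -- a clique of a bipartite graph has at most one vertex on each side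
  have hside : ∀ i, ∃ col, ∀ s ∈ S, fB s = i → c (f, s) = some col := by
    intro i
    obtain ⟨s₀, hs₀, -⟩ := hSfB x₀
    by_cases hi : ∃ s ∈ S, fB s = i
    · obtain ⟨s, hs, rfl⟩ := hi
      obtain ⟨col, hcol⟩ := Option.ne_none_iff_exists'.1 ((hseed s).2 hs)
      refine ⟨col, fun s' hs' hss' => ?_⟩
      by_cases h : s' = s
      · rwa [h]
      · exact absurd hss' (hfB s' s (hS hs' hs h))
    · obtain ⟨col, -⟩ := Option.ne_none_iff_exists'.1 ((hseed s₀).2 hs₀)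
      exact ⟨col, fun s hs hsi => absurd ⟨s, hs, hsi⟩ hi⟩
  choose τ hτ using hside
  refine ⟨τ, fun x hx => ?_⟩
  obtain ⟨s, hs, hsx⟩ := hSfB x
  have hcs := hτ _ s hs hsx
  refine ⟨⟨s, hcs⟩, ?_, fun y hxy hy => ?_⟩
  · rintro ⟨g, y⟩ (hgf | ⟨hgf, hyx⟩) hy
    · exact hc _ _ hcs (g, y) (Or.inl hgf) hy
    · obtain rfl : g = f := hgf
      have hyS : y ∈ S := (hseed y).1 (by rw [hy]; simp)
      have hne : fB y ≠ fB s := hsx ▸ hfB y x hyx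
      exact hc _ _ hy _ (hseedAdj s hs y hyS hne.symm) hcs
  · obtain ⟨s', hs', hsy⟩ := hSfB y
    exact hc.ne_of_adj (hseedAdj s hs s' hs' (hsx ▸ hsy ▸ hfB x y hxy)) hcs (hτ _ s' hs' hsy)

end LexProd

section Seeding

variable {α β : Type*} {G : SimpleGraph α} {H : SimpleGraph β} {k : ℕ}
  {c : α × β → Option (Fin k)} {A : Finset α} {S : Finset β}

noncomputable def pureColors (c : α × β → Option (Fin k)) (a : α) : Finset (Fin k) :=
  {col | (∃ x, c (a, x) = some col) ∧ ∀ v, c v = some col → v.1 = a}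

def seedDemand (S : Finset β) (c : α × β → Option (Fin k)) (b : α) : ℕ :=
  #{s ∈ S | c (b, s) = none}

noncomputable def coNbrs (G : SimpleGraph α) (A : Finset α) (b : α) : Finset α :=
  {a ∈ A | ¬ G.Adj b a}

theorem mem_pureColors {a : α} {col : Fin k} :
    col ∈ pureColors c a ↔ (∃ x, c (a, x) = some col) ∧ ∀ v, c v = some col → v.1 = a := by
  simp [pureColors]

theorem pureColors_update {a b : α} (hab : a ≠ b) {x : β} (hv : c (b, x) = none) (col : Fin k) :
    pureColors (Function.update c (b, x) (some col)) a = (pureColors c a).erase col := by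
  ext col'
  have hax : ∀ y, ((a, y) : α × β) ≠ (b, x) := fun y h => hab (congrArg Prod.fst h)
  simp only [mem_erase, mem_pureColors, Function.update_of_ne (hax _)]
  rcases eq_or_ne col' col with rfl | hne
  · simp only [ne_eq, not_true_eq_false, false_and, iff_false, not_and]
    exact fun _ h => hab.symm (h (b, x) (Function.update_self ..))
  · have hiff : ∀ v, Function.update c (b, x) (some col) v = some col' ↔ c v = some col' := by
      intro v
      rcases eq_or_ne v (b, x) with rfl | hv'
      · simp [hv, hne.symm]
      · rw [Function.update_of_ne hv']
    simp only [hiff, ne_eq, hne, not_false_eq_true, true_and]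

theorem seedDemand_update {b : α} {s : β} (hs : s ∈ S) (hv : c (b, s) = none) (col : Fin k) :
    seedDemand S (Function.update c (b, s) (some col)) =
      Function.update (seedDemand S c) b (seedDemand S c b - 1) := by
  ext g
  rcases eq_or_ne g b with rfl | hgb
  · have hmem : s ∈ ({y ∈ S | c (g, y) = none} : Finset β) := mem_filter.2 ⟨hs, hv⟩
    rw [Function.update_self, seedDemand, seedDemand, ← card_erase_of_mem hmem]
    congr 1
    ext y
    rcases eq_or_ne y s with rfl | hys <;> simp_all
  · rw [Function.update_of_ne hgb, seedDemand, seedDemand]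
    congr 1
    ext y
    simp [Function.update_of_ne (fun h : ((g, y) : α × β) = (b, s) => hgb (congrArg Prod.fst h))]

theorem isAvailable_of_mem_pureColors {a b : α} (hab : a ≠ b) (hG : ¬ G.Adj a b) {col : Fin k}
    (hcol : col ∈ pureColors c a) (x : β) : IsAvailable (lexProd G H) c (b, x) col := by
  rintro ⟨g, y⟩ hadj hy
  obtain rfl : g = a := (mem_pureColors.1 hcol).2 _ hy
  rcases hadj with h | h
  · exact hG h
  · exact hab h.1

/-- The fibres using `col` avoid the clique `Aᶜ ∋ b`, so they lie in the clique `A` and hence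
coincide. -/
theorem exists_mem_pureColors_of_isAvailable [Fintype α] (hA : G.IsClique (A : Set α))
    (hB : G.IsClique ((Aᶜ : Finset α) : Set α)) (hS : H.IsClique (S : Set β))
    (hc : IsProperPartial (lexProd G H) c) (hsupp : ∀ v, c v ≠ none → v.2 ∈ S) {b : α}
    (hb : b ∉ A) {s : β} (hs : s ∈ S) (hv : c (b, s) = none) {col : Fin k}
    (hcol : IsAvailable (lexProd G H) c (b, s) col) (hused : ∃ v, c v = some col) :
    ∃ a ∈ coNbrs G A b, col ∈ pureColors c a := by
  have huser : ∀ g y, c (g, y) = some col → g ∈ A ∧ ¬ G.Adj b g := by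
    intro g y hy
    have hgb : g ≠ b := by
      rintro rfl
      have hyS : y ∈ S := hsupp (g, y) (by simp [hy])
      exact hcol (g, y) (Or.inr ⟨rfl, hS hyS hs fun h => by simp_all⟩) hy
    have hGgb : ¬ G.Adj g b := fun h => hcol _ (Or.inl h) hy
    refine ⟨by_contra fun hgA => hGgb (hB (by simpa using hgA) (by simpa using hb) hgb), ?_⟩
    exact fun h => hGgb h.symm
  obtain ⟨⟨g, y⟩, hy⟩ := hused
  obtain ⟨hgA, hGbg⟩ := huser g y hy
  refine ⟨g, by simp [coNbrs, hgA, hGbg], mem_pureColors.2 ⟨⟨y, hy⟩, ?_⟩⟩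
  rintro ⟨g', y'⟩ hy'
  by_contra hne
  exact hc.ne_of_adj (Or.inl (hA (huser g' y' hy').1 hgA hne)) hy' hy rfl

end Seeding

section SeedingGame

variable {α β : Type*} [Fintype α] [Fintype β] {G : SimpleGraph α} {H : SimpleGraph β} {k : ℕ}
  {c : α × β → Option (Fin k)} {A : Finset α} {S : Finset β}

/-- The Hall-type inequality `demand(T) + #used ≤ k + ∑_{a ∈ N(T)} #pure(a)` for `T ⊆ Aᶜ`: a
colour that is new, or pure at a non-neighbour in `A`, can serve a seed of `T`. -/
def SeedingHall (G : SimpleGraph α) (A : Finset α) (S : Finset β) (c : α × β → Option (Fin k)) :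
    Prop :=
  HallCondition Aᶜ (coNbrs G A) (seedDemand S c) (fun a => #(pureColors c a)) #(usedColors c) k

theorem SeedingHall.exists_isAvailable (hHall : SeedingHall G A S c) {b : α} (hb : b ∈ Aᶜ)
    (hd : seedDemand S c b ≠ 0) (x : β) : ∃ col, IsAvailable (lexProd G H) c (b, x) col := by
  have hsingle := hHall {b} (singleton_subset_iff.2 hb)
  simp only [sum_singleton, singleton_biUnion] at hsingle
  by_cases hsupply : ∑ a ∈ coNbrs G A b, #(pureColors c a) = 0
  · obtain ⟨col, hcol⟩ := exists_notMem_usedColors (by omega : #(usedColors c) < k)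
    exact ⟨col, isAvailable_of_notMem_usedColors hcol _⟩
  · obtain ⟨a, ha, hne⟩ := exists_ne_zero_of_sum_ne_zero hsupply
    obtain ⟨col, hcol⟩ := card_ne_zero.1 hne
    obtain ⟨haA, hGba⟩ := mem_filter.1 ha
    have hab : a ≠ b := by rintro rfl; exact (mem_compl.1 hb) haA
    exact ⟨col, isAvailable_of_mem_pureColors hab (fun h => hGba h.symm) hcol x⟩

theorem SeedingHall.update (hA : G.IsClique (A : Set α))
    (hB : G.IsClique ((Aᶜ : Finset α) : Set α)) (hS : H.IsClique (S : Set β))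
    (hc : IsProperPartial (lexProd G H) c) (hsupp : ∀ v, c v ≠ none → v.2 ∈ S)
    (hHall : SeedingHall G A S c) {b : α}
    (hb : IsHallPivot Aᶜ (coNbrs G A) (seedDemand S c) (fun a => #(pureColors c a))
      #(usedColors c) k b) {s : β} (hs : s ∈ S) (hv : c (b, s) = none) {col : Fin k}
    (hcol : IsAvailable (lexProd G H) c (b, s) col) :
    SeedingHall G A S (Function.update c (b, s) (some col)) := by
  have hbA : b ∉ A := mem_compl.1 hb.1
  have hpure : ∀ b' ∈ Aᶜ, ∀ a ∈ coNbrs G A b',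
      pureColors (Function.update c (b, s) (some col)) a = (pureColors c a).erase col :=
    fun _ _ a ha => pureColors_update (by rintro rfl; exact hbA (mem_filter.1 ha).1) hv col
  unfold SeedingHall
  rw [seedDemand_update hs hv, usedColors_update hv]
  by_cases hused : col ∈ usedColors c
  · obtain ⟨a₀, ha₀, hpa₀⟩ := exists_mem_pureColors_of_isAvailable hA hB hS hc hsupp hbA hs hv
      hcol (mem_usedColors.1 hused)
    rw [insert_eq_of_mem hused]
    refine HallCondition.update_of_reuse hHall hb ha₀ (card_ne_zero_of_mem hpa₀)
      fun b' hb' a ha => ?_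
    rw [hpure b' hb' a ha]
    rcases eq_or_ne a a₀ with rfl | hne
    · rw [Function.update_self, card_erase_of_mem hpa₀]
    · rw [Function.update_of_ne hne, erase_eq_of_notMem]
      obtain ⟨⟨x, hx⟩, -⟩ := mem_pureColors.1 hpa₀
      exact fun h => hne ((mem_pureColors.1 h).2 _ hx).symm
  · have hU : #(usedColors c) < k := by
      simpa using card_lt_card (ssubset_univ_iff.2 fun h => hused (h ▸ mem_univ col :))
    rw [card_insert_of_notMem hused]
    refine HallCondition.update_of_fresh hHall hb hU fun b' hb' a ha => ?_
    rw [hpure b' hb' a ha, erase_eq_of_notMem]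
    intro h
    obtain ⟨⟨x, hx⟩, -⟩ := mem_pureColors.1 h
    exact hused (mem_usedColors.2 ⟨_, hx⟩)

theorem annWins_of_seedingHall {fB : β → Bool} (hA : G.IsClique (A : Set α))
    (hB : G.IsClique ((Aᶜ : Finset α) : Set α)) (hfB : ∀ x y, H.Adj x y → fB x ≠ fB y)
    (hS : H.IsClique (S : Set β)) (hSfB : ∀ x, ∃ s ∈ S, fB s = fB x)
    (hc : IsProperPartial (lexProd G H) c) (hsupp : ∀ v, c v ≠ none → v.2 ∈ S)
    (hAS : ∀ a ∈ A, ∀ s ∈ S, c (a, s) ≠ none) (hHall : SeedingHall G A S c) :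
    AnnWins (lexProd G H) k c := by
  refine AnnWins.of_invariant (fun c => (∀ v, c v ≠ none → v.2 ∈ S) ∧
      (∀ a ∈ A, ∀ s ∈ S, c (a, s) ≠ none) ∧ SeedingHall G A S c)
    (fun c hc ⟨hsupp, hAS, hHall⟩ => ?_) c hc ⟨hsupp, hAS, hHall⟩
  by_cases hd : ∃ b ∈ Aᶜ, seedDemand S c b ≠ 0
  · obtain ⟨b, hb⟩ := HallCondition.exists_isHallPivot hHall
      (by simpa using card_le_univ (usedColors c)) hd
    obtain ⟨s, hs⟩ := card_ne_zero.1 hb.2.1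
    obtain ⟨hs, hv⟩ := mem_filter.1 hs
    refine Or.inr ⟨(b, s), hv, hHall.exists_isAvailable hb.1 hb.2.1 s,
      fun col hcol => ⟨fun v hv' => ?_, fun a ha s' hs' => ?_,
        hHall.update hA hB hS hc hsupp hb hs hv hcol⟩⟩
    · rcases eq_or_ne v (b, s) with rfl | hvb
      · exact hs
      · exact hsupp v (by rwa [Function.update_of_ne hvb] at hv')
    · rcases eq_or_ne (a, s') (b, s) with h | h
      · simp [h]
      · rw [Function.update_of_ne h]
        exact hAS a ha s' hs'
  · push Not at hd
    refine Or.inl (annWins_of_forall_isTemplate hfB hc fun f ⟨x, hx⟩ =>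
      exists_isTemplate_of_seeded hfB hS hSfB hc (fun y => ⟨hsupp (f, y), fun hy => ?_⟩) hx)
    by_cases hf : f ∈ A
    · exact hAS f hf y hy
    · have := hd f (mem_compl.2 hf)
      rw [seedDemand, card_eq_zero, filter_eq_empty_iff] at this
      exact this hy

end SeedingGame

section CliqueSeeding

variable {α β : Type*} {G : SimpleGraph α} {H : SimpleGraph β} {k : ℕ}
  {c : α × β → Option (Fin k)} {A : Finset α} {S : Finset β}

theorem card_mul_card_le_of_coloring (C : (lexProd G H).Coloring (Fin k)) {F : Finset α}
    (hF : G.IsClique (F : Set α)) (hS : H.IsClique (S : Set β)) : #F * #S ≤ k := by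
  have hclique : (lexProd G H).IsClique ((F ×ˢ S : Finset (α × β)) : Set (α × β)) := by
    rw [coe_product]
    exact isClique_lexProd_product hF hS
  simpa using hclique.card_le_of_coloring C

/-- `(A \ N(T)) ∪ T` is a clique of `G`. -/
theorem add_mul_card_le_of_coloring [Fintype α] (C : (lexProd G H).Coloring (Fin k))
    (hA : G.IsClique (A : Set α)) (hB : G.IsClique ((Aᶜ : Finset α) : Set α))
    (hS : H.IsClique (S : Set β)) {T : Finset α} (hT : T ⊆ Aᶜ) :
    (#T + #A) * #S ≤ k + #(T.biUnion (coNbrs G A)) * #S := by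
  set N := T.biUnion (coNbrs G A)
  have hNA : N ⊆ A := biUnion_subset.2 fun _ _ => filter_subset _ _
  have hcross : ∀ a ∈ A \ N, ∀ b ∈ T, G.Adj a b := by
    intro a ha b hb
    obtain ⟨haA, haN⟩ := mem_sdiff.1 ha
    by_contra hab
    exact haN (mem_biUnion.2 ⟨b, hb, mem_filter.2 ⟨haA, fun h => hab h.symm⟩⟩)
  have hF : G.IsClique ((A \ N ∪ T : Finset α) : Set α) := by
    intro f hf g hg hfg
    simp only [coe_union, Set.mem_union, mem_coe] at hf hg
    rcases hf with hf | hf <;> rcases hg with hg | hg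
    · exact hA (mem_sdiff.1 hf).1 (mem_sdiff.1 hg).1 hfg
    · exact hcross f hf g hg
    · exact (hcross g hg f hf).symm
    · exact hB (hT hf) (hT hg) hfg
  have hdisj : Disjoint (A \ N) T :=
    disjoint_left.2 fun a ha haT => mem_compl.1 (hT haT) (mem_sdiff.1 ha).1
  have hbound := card_mul_card_le_of_coloring C hF hS
  rw [card_union_of_disjoint hdisj] at hbound
  have hsplit := card_sdiff_add_card_eq_card hNA
  nlinarith

theorem card_le_card_pureColors (hA : G.IsClique (A : Set α)) (hS : H.IsClique (S : Set β))
    (hc : IsProperPartial (lexProd G H) c) (hsupp : ∀ v, c v ≠ none ↔ v ∈ A ×ˢ S) {a : α}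
    (ha : a ∈ A) : #S ≤ #(pureColors c a) := by
  have hcol : ∀ s ∈ S, ∃ col, c (a, s) = some col := fun s hs =>
    Option.ne_none_iff_exists'.1 ((hsupp _).2 (mem_product.2 ⟨ha, hs⟩))
  calc #S ≤ #((pureColors c a).map Function.Embedding.some) := by
        refine card_le_card_of_injOn (fun s => c (a, s)) (fun s hs => ?_) fun s hs s' hs' h => ?_
        · obtain ⟨col, hs'⟩ := hcol s hs
          refine mem_map.2 ⟨col, mem_pureColors.2 ⟨⟨s, hs'⟩, fun v hv => ?_⟩, hs'.symm⟩
          by_contra hva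
          have hvA := (mem_product.1 ((hsupp v).1 (by simp [hv]))).1
          exact hc.ne_of_adj (Or.inl (hA hvA ha hva)) hv hs' rfl
        · by_contra hne
          obtain ⟨col, hs₁⟩ := hcol s hs
          have hadj : (lexProd G H).Adj (a, s) (a, s') := Or.inr ⟨rfl, hS hs hs' hne⟩
          exact hc.ne_of_adj hadj hs₁ (h.symm.trans hs₁) rfl
    _ = #(pureColors c a) := card_map _

theorem seedingHall_of_support_eq_product [Fintype α] [Fintype β]
    (C : (lexProd G H).Coloring (Fin k)) (hA : G.IsClique (A : Set α))
    (hB : G.IsClique ((Aᶜ : Finset α) : Set α)) (hS : H.IsClique (S : Set β))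
    (hc : IsProperPartial (lexProd G H) c) (hsupp : ∀ v, c v ≠ none ↔ v ∈ A ×ˢ S) :
    SeedingHall G A S c := by
  intro T hT
  have hdemand : ∑ b ∈ T, seedDemand S c b ≤ #T * #S := by
    simpa using sum_le_card_nsmul T (seedDemand S c) #S fun b _ => card_filter_le S _
  have hused : #(usedColors c) ≤ #A * #S :=
    (card_usedColors_le fun v hv => (hsupp v).1 hv).trans_eq (card_product A S)
  have hsupply : #(T.biUnion (coNbrs G A)) * #S ≤
      ∑ a ∈ T.biUnion (coNbrs G A), #(pureColors c a) := by
    simpa only [smul_eq_mul] using card_nsmul_le_sum (T.biUnion (coNbrs G A)) _ #S fun a ha =>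
      card_le_card_pureColors hA hS hc hsupp (biUnion_subset.2 (fun _ _ => filter_subset _ _) ha)
  have hcount := add_mul_card_le_of_coloring C hA hB hS hT
  nlinarith

theorem annWins_of_support_subset_product [Fintype α] [Fintype β] {fB : β → Bool}
    (C : (lexProd G H).Coloring (Fin k)) (hA : G.IsClique (A : Set α))
    (hB : G.IsClique ((Aᶜ : Finset α) : Set α)) (hfB : ∀ x y, H.Adj x y → fB x ≠ fB y)
    (hS : H.IsClique (S : Set β)) (hSfB : ∀ x, ∃ s ∈ S, fB s = fB x)
    (hc : IsProperPartial (lexProd G H) c) (hsupp : ∀ v, c v ≠ none → v ∈ A ×ˢ S) :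
    AnnWins (lexProd G H) k c := by
  refine AnnWins.of_invariant (fun c => ∀ v, c v ≠ none → v ∈ A ×ˢ S)
    (fun c hc hsupp => ?_) c hc hsupp
  by_cases hfull : ∀ v ∈ A ×ˢ S, c v ≠ none
  · have hsupp' : ∀ v, c v ≠ none ↔ v ∈ A ×ˢ S := fun v => ⟨hsupp v, hfull v⟩
    refine Or.inl (annWins_of_seedingHall hA hB hfB hS hSfB hc
      (fun v hv => (mem_product.1 (hsupp v hv)).2)
      (fun a ha s hs => hfull _ (mem_product.2 ⟨ha, hs⟩))
      (seedingHall_of_support_eq_product C hA hB hS hc hsupp'))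
  push Not at hfull
  obtain ⟨v, hvAS, hv⟩ := hfull
  have hU : #(usedColors c) < k :=
    calc #(usedColors c) ≤ #((A ×ˢ S).erase v) :=
          card_usedColors_le fun w hw => mem_erase.2 ⟨by rintro rfl; exact hw hv, hsupp w hw⟩
      _ < #A * #S := card_product A S ▸ card_erase_lt_of_mem hvAS
      _ ≤ k := card_mul_card_le_of_coloring C hA hS
  obtain ⟨col, hcol⟩ := exists_notMem_usedColors hU
  refine Or.inr ⟨v, hv, ⟨col, isAvailable_of_notMem_usedColors hcol v⟩, fun col _ w hw => ?_⟩
  rcases eq_or_ne w v with rfl | hwv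
  · exact hvAS
  · exact hsupp w (by rwa [Function.update_of_ne hwv] at hw)

end CliqueSeeding

theorem exists_isClique_isClique_compl {α : Type*} [Fintype α] {G : SimpleGraph α}
    (hG : Gᶜ.Colorable 2) : ∃ A : Finset α, G.IsClique (A : Set α) ∧
      G.IsClique ((Aᶜ : Finset α) : Set α) := by
  let C := hG.toColoring (α := Bool) (by simp)
  have hsame : ∀ a a', a ≠ a' → C a = C a' → G.Adj a a' := fun a a' hne hC => by
    by_contra hadj
    exact C.valid ((compl_adj G a a').2 ⟨hne, hadj⟩) hC
  refine ⟨({a | C a} : Finset α), fun a ha a' ha' hne => hsame a a' hne ?_, fun a ha a' ha' hne =>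
    hsame a a' hne ?_⟩ <;> simp_all

theorem exists_bipartition_and_clique_meeting_sides {β : Type*} [Fintype β] [Nonempty β]
    {H : SimpleGraph β} (hH : H.Colorable 2) :
    ∃ (fB : β → Bool) (S : Finset β), (∀ x y, H.Adj x y → fB x ≠ fB y) ∧
      H.IsClique (S : Set β) ∧ ∀ x, ∃ s ∈ S, fB s = fB x := by
  by_cases hE : ∃ x y, H.Adj x y
  · obtain ⟨x, y, hxy⟩ := hE
    let C := hH.toColoring (α := Bool) (by simp)
    refine ⟨C, {x, y}, fun _ _ h => C.valid h, by simpa using fun _ => hxy, fun z => ?_⟩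
    have hC : C x ≠ C y := C.valid hxy
    by_cases hz : C x = C z
    · exact ⟨x, by simp, hz⟩
    · exact ⟨y, by simp, by revert hC hz; cases C x <;> cases C y <;> cases C z <;> simp⟩
  · push Not at hE
    exact ⟨fun _ => true, {Classical.arbitrary β}, fun x y h => (hE x y h).elim, by simp,
      fun x => ⟨_, mem_singleton_self _, rfl⟩⟩

/-- If `G` is the complement of a bipartite graph and `H` is a nonempty bipartite graph,
then `G[H]` is `k`-indicated colorable for every `k ≥ χ(G[H])`. -/
theorem lexProd_complBipartite_bipartite_indicatedColorable
    {α β : Type*} [Fintype α] [Fintype β] [Nonempty β]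
    (G : SimpleGraph α) (hG : Gᶜ.Colorable 2)
    (H : SimpleGraph β) (hH : H.Colorable 2) (k : ℕ)
    (hk : (lexProd G H).chromaticNumber ≤ k) :
    IndicatedColorable (lexProd G H) k := by
  obtain ⟨C⟩ := chromaticNumber_le_iff_colorable.mp hk
  obtain ⟨A, hA, hB⟩ := exists_isClique_isClique_compl hG
  obtain ⟨fB, S, hfB, hS, hSfB⟩ := exists_bipartition_and_clique_meeting_sides hH
  exact annWins_of_support_subset_product C hA hB hfB hS hSfB (by simp [IsProperPartial])
    fun v hv => absurd rfl hv
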